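/- arXiv:1806.09529 — 5 statements merged into one kernel-verified Lean document; each statement's English description precedes it below -/
import Mathlib

section
/- Let N and M be positive integers and let F ∈ ℝ^{M×M} be a symmetric matrix. For every z ∈ ℂ with Im z > 0 there exists a unique m ∈ ℂ with Im m > 0 such that the matrix Id_M + m·F is invertible and z = −1/m + (1/N)·Tr(F·(Id_M + m·F)^{−1}). -/
/-!
Diagonalising `F` reduces the equation to a scalar one in the eigenvalues `λᵢ`. In the variable
`u = -1/m ∈ ℂ⁺` it becomes the fixed-point equation `u = T u := w - ∑ cᵢ / (u - λᵢ)` with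
`cᵢ = λᵢ² / N ≥ 0` and `w = z - (∑ λᵢ) / N ∈ ℂ⁺`. The map `T` sends `ℂ⁺` into `{Im ≥ Im w}` and, by
Cauchy–Schwarz, multiplies the hyperbolic quantity `|u - v|² / (Im u Im v)` by at most
`(1 - Im w / Im T u) (1 - Im w / Im T v) < 1`. This gives uniqueness at once. The orbit of `w` stays
in the strip `Im w ≤ Im ≤ Im w + (∑ cᵢ) / Im w`, where that factor is uniformly below `1`, so the
orbit is Cauchy and its limit is a fixed point.
-/

open Matrix Complex Finset Unitary

namespace MarcenkoPastur

/-- `hypQuot u v = 2 (cosh d(u, v) - 1)` for the hyperbolic distance `d` of the upper half-plane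
(`UpperHalfPlane.cosh_dist`). -/
noncomputable def hypQuot (u v : ℂ) : ℝ := ‖u - v‖ ^ 2 / (u.im * v.im)

theorem cauchySeq_of_hypQuot_le_geometric {u : ℕ → ℂ} {A q : ℝ} (hq0 : 0 ≤ q) (hq1 : q < 1)
    (him : ∀ n, 0 < (u n).im) (hA : ∀ n, (u n).im ≤ A)
    (hstep : ∀ n, hypQuot (u (n + 2)) (u (n + 1)) ≤ q ^ 2 * hypQuot (u (n + 1)) (u n)) :
    CauchySeq u := by
  set E₀ := hypQuot (u 1) (u 0)
  have hE₀ : 0 ≤ E₀ := div_nonneg (sq_nonneg _) (mul_pos (him 1) (him 0)).le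
  have hgeom (n : ℕ) : hypQuot (u (n + 1)) (u n) ≤ (q ^ 2) ^ n * E₀ :=
    le_geom (u := fun n => hypQuot (u (n + 1)) (u n)) (sq_nonneg q) n fun k _ => hstep k
  refine cauchySeq_of_le_geometric q (A * √E₀) hq1 fun n => ?_
  have hprod : (u (n + 1)).im * (u n).im ≤ A ^ 2 := by
    nlinarith [him n, him (n + 1), hA n, hA (n + 1)]
  calc dist (u n) (u (n + 1))
      = √(hypQuot (u (n + 1)) (u n) * ((u (n + 1)).im * (u n).im)) := by
        rw [hypQuot, div_mul_cancel₀ _ (mul_pos (him _) (him _)).ne', Real.sqrt_sq (norm_nonneg _),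
          dist_comm, dist_eq_norm]
    _ ≤ √((q ^ 2) ^ n * E₀ * A ^ 2) :=
        Real.sqrt_le_sqrt (mul_le_mul (hgeom n) hprod
          (mul_pos (him _) (him _)).le (by positivity))
    _ = A * √E₀ * q ^ n := by
        rw [show (q ^ 2) ^ n * E₀ * A ^ 2 = (A * q ^ n) ^ 2 * E₀ by ring,
          Real.sqrt_mul (sq_nonneg _), Real.sqrt_sq (mul_nonneg ((him 0).le.trans (hA 0)) (pow_nonneg hq0 n))]
        ring

section FixedPoint

variable {ι : Type*} [Fintype ι] (c p : ι → ℝ) (w : ℂ)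

noncomputable def mpMap (u : ℂ) : ℂ := w - ∑ i, (c i : ℂ) / (u - p i)

noncomputable def invNormSqSum (u : ℂ) : ℝ := ∑ i, c i / normSq (u - p i)

variable {c p w}

lemma sub_ofReal_ne_zero {u : ℂ} (hu : u.im ≠ 0) (x : ℝ) : u - x ≠ 0 := by
  intro h
  exact hu (by simpa using congrArg Complex.im h)

lemma invNormSqSum_nonneg (hc : ∀ i, 0 ≤ c i) (u : ℂ) : 0 ≤ invNormSqSum c p u :=
  sum_nonneg fun i _ => div_nonneg (hc i) (normSq_nonneg _)

lemma im_mpMap (u : ℂ) : (mpMap c p w u).im = w.im + u.im * invNormSqSum c p u := by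
  simp only [mpMap, invNormSqSum, sub_im, im_sum, div_im, ofReal_im, ofReal_re, sub_re, mul_sum]
  simp only [zero_mul, zero_div, zero_sub, sum_neg_distrib, sub_neg_eq_add, add_right_inj]
  exact sum_congr rfl fun i _ => by ring

lemma im_le_im_mpMap (hc : ∀ i, 0 ≤ c i) {u : ℂ} (hu : 0 ≤ u.im) :
    w.im ≤ (mpMap c p w u).im := by
  rw [im_mpMap]
  exact le_add_of_nonneg_right (mul_nonneg hu (invNormSqSum_nonneg hc u))

lemma mpMap_sub_mpMap {u v : ℂ} (hu : u.im ≠ 0) (hv : v.im ≠ 0) :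
    mpMap c p w u - mpMap c p w v = (u - v) * ∑ i, (c i : ℂ) / ((u - p i) * (v - p i)) := by
  rw [mpMap, mpMap, mul_sum, sub_sub_sub_cancel_left, ← sum_sub_distrib]
  refine sum_congr rfl fun i _ => ?_
  have := sub_ofReal_ne_zero hu (p i)
  have := sub_ofReal_ne_zero hv (p i)
  field_simp
  ring

lemma norm_sum_div_mul_sq_le (hc : ∀ i, 0 ≤ c i) (u v : ℂ) :
    ‖∑ i, (c i : ℂ) / ((u - p i) * (v - p i))‖ ^ 2 ≤ invNormSqSum c p u * invNormSqSum c p v := by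
  have hnorm (i : ι) : ‖(c i : ℂ) / ((u - p i) * (v - p i))‖ ^ 2
      ≤ c i / normSq (u - p i) * (c i / normSq (v - p i)) := by
    rw [norm_div, norm_mul, Complex.norm_of_nonneg (hc i), div_pow, mul_pow, ← normSq_eq_norm_sq,
      ← normSq_eq_norm_sq, div_mul_div_comm, sq]
  calc ‖∑ i, (c i : ℂ) / ((u - p i) * (v - p i))‖ ^ 2
      ≤ (∑ i, ‖(c i : ℂ) / ((u - p i) * (v - p i))‖) ^ 2 := by
        gcongr
        exact norm_sum_le _ _
    _ ≤ invNormSqSum c p u * invNormSqSum c p v :=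
        sum_sq_le_sum_mul_sum_of_sq_le_mul _ (fun i _ => div_nonneg (hc i) (normSq_nonneg _))
          (fun i _ => div_nonneg (hc i) (normSq_nonneg _)) fun i _ => hnorm i

lemma norm_mpMap_sub_sq_mul_im_le (hc : ∀ i, 0 ≤ c i) {u v : ℂ} (hu : 0 < u.im) (hv : 0 < v.im) :
    ‖mpMap c p w u - mpMap c p w v‖ ^ 2 * (u.im * v.im)
      ≤ ‖u - v‖ ^ 2 * (((mpMap c p w u).im - w.im) * ((mpMap c p w v).im - w.im)) := by
  rw [mpMap_sub_mpMap hu.ne' hv.ne', im_mpMap, im_mpMap, norm_mul, mul_pow]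
  calc ‖u - v‖ ^ 2 * ‖∑ i, (c i : ℂ) / ((u - p i) * (v - p i))‖ ^ 2 * (u.im * v.im)
      ≤ ‖u - v‖ ^ 2 * (invNormSqSum c p u * invNormSqSum c p v) * (u.im * v.im) := by
        gcongr
        exact norm_sum_div_mul_sq_le hc u v
    _ = _ := by ring

theorem eq_of_mpMap_eq_self (hc : ∀ i, 0 ≤ c i) (hw : 0 < w.im) {u v : ℂ} (hu : 0 < u.im)
    (hv : 0 < v.im) (hTu : mpMap c p w u = u) (hTv : mpMap c p w v = v) : u = v := by
  have key := norm_mpMap_sub_sq_mul_im_le (p := p) (w := w) hc hu hv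
  have hwu : w.im ≤ u.im := hTu ▸ im_le_im_mpMap hc hu.le
  have hwv : w.im ≤ v.im := hTv ▸ im_le_im_mpMap hc hv.le
  rw [hTu, hTv] at key
  by_contra hne
  have hpos : 0 < ‖u - v‖ ^ 2 := pow_pos (norm_pos_iff.mpr (sub_ne_zero.mpr hne)) 2
  have hlt : (u.im - w.im) * (v.im - w.im) < u.im * v.im := by nlinarith
  nlinarith [mul_lt_mul_of_pos_left hlt hpos]

lemma im_mpMap_le (hc : ∀ i, 0 ≤ c i) (hw : 0 < w.im) {u : ℂ} (hu : w.im ≤ u.im) :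
    (mpMap c p w u).im ≤ w.im + (∑ i, c i) / w.im := by
  have hu0 : 0 < u.im := hw.trans_le hu
  rw [im_mpMap, invNormSqSum, mul_sum, sum_div, add_le_add_iff_left]
  refine sum_le_sum fun i _ => ?_
  have hnormSq : u.im ^ 2 ≤ normSq (u - p i) := by
    rw [normSq_apply, sub_im, ofReal_im, sub_zero]
    nlinarith [mul_self_nonneg (u - p i).re]
  rw [mul_div_assoc', div_le_div_iff₀ ((pow_pos hu0 2).trans_le hnormSq) hw]
  nlinarith [hc i, mul_le_mul_of_nonneg_left hnormSq (hc i),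
    mul_le_mul_of_nonneg_left hu (mul_nonneg (hc i) hu0.le)]

lemma hypQuot_mpMap_le (hc : ∀ i, 0 ≤ c i) (hw : 0 < w.im) {A : ℝ} {u v : ℂ} (hu : 0 < u.im)
    (hv : 0 < v.im) (hTu : (mpMap c p w u).im ≤ A) (hTv : (mpMap c p w v).im ≤ A) :
    hypQuot (mpMap c p w u) (mpMap c p w v) ≤ (1 - w.im / A) ^ 2 * hypQuot u v := by
  set a := (mpMap c p w u).im
  set b := (mpMap c p w v).im
  have ha : w.im ≤ a := im_le_im_mpMap hc hu.le
  have hb : w.im ≤ b := im_le_im_mpMap hc hv.le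
  have hA : 0 < A := hw.trans_le (ha.trans hTu)
  have hq (x : ℝ) (hx : x ≤ A) : x - w.im ≤ (1 - w.im / A) * x := by
    rw [sub_mul, one_mul, div_mul_eq_mul_div, sub_le_sub_iff_left, div_le_iff₀ hA]
    exact mul_le_mul_of_nonneg_left hx hw.le
  have key := norm_mpMap_sub_sq_mul_im_le (p := p) (w := w) hc hu hv
  rw [hypQuot, hypQuot, mul_div_assoc', div_le_div_iff₀ (by nlinarith) (mul_pos hu hv)]
  calc ‖mpMap c p w u - mpMap c p w v‖ ^ 2 * (u.im * v.im)
      ≤ ‖u - v‖ ^ 2 * ((a - w.im) * (b - w.im)) := key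
    _ ≤ ‖u - v‖ ^ 2 * (((1 - w.im / A) * a) * ((1 - w.im / A) * b)) :=
        mul_le_mul_of_nonneg_left (mul_le_mul (hq a hTu) (hq b hTv) (sub_nonneg.mpr hb)
          ((sub_nonneg.mpr ha).trans (hq a hTu))) (sq_nonneg _)
    _ = (1 - w.im / A) ^ 2 * ‖u - v‖ ^ 2 * (a * b) := by ring

theorem exists_mpMap_eq_self (hc : ∀ i, 0 ≤ c i) (hw : 0 < w.im) :
    ∃ u, 0 < u.im ∧ mpMap c p w u = u := by
  set A := w.im + (∑ i, c i) / w.im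
  have hwA : w.im ≤ A := le_add_of_nonneg_right (div_nonneg (sum_nonneg fun i _ => hc i) hw.le)
  set orbit : ℕ → ℂ := fun n => (mpMap c p w)^[n] w
  have horbit_succ (n : ℕ) : orbit (n + 1) = mpMap c p w (orbit n) :=
    Function.iterate_succ_apply' _ _ _
  have hlo (n : ℕ) : w.im ≤ (orbit n).im := by
    induction n with
    | zero => exact le_rfl
    | succ n ih => rw [horbit_succ]; exact im_le_im_mpMap hc (hw.le.trans ih)
  have hhi (n : ℕ) : (orbit n).im ≤ A := by
    cases n with
    | zero => exact hwA
    | succ n => rw [horbit_succ]; exact im_mpMap_le hc hw (hlo n)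
  have hcauchy : CauchySeq orbit := by
    refine cauchySeq_of_hypQuot_le_geometric (q := 1 - w.im / A) ?_ ?_
      (fun n => hw.trans_le (hlo n)) hhi fun n => ?_
    · exact sub_nonneg.mpr ((div_le_one (hw.trans_le hwA)).mpr hwA)
    · exact sub_lt_self _ (div_pos hw (hw.trans_le hwA))
    · have hstep := hypQuot_mpMap_le hc hw (hw.trans_le (hlo (n + 1))) (hw.trans_le (hlo n))
        ((horbit_succ (n + 1)).symm ▸ hhi (n + 2)) ((horbit_succ n).symm ▸ hhi (n + 1))
      rwa [← horbit_succ, ← horbit_succ] at hstep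
  obtain ⟨L, hL⟩ := cauchySeq_tendsto_of_complete hcauchy
  have hL_im : w.im ≤ L.im := ge_of_tendsto' ((continuous_im.tendsto L).comp hL) hlo
  refine ⟨L, hw.trans_le hL_im, isFixedPt_of_tendsto_iterate hL ?_⟩
  unfold mpMap
  fun_prop (disch := exact sub_ofReal_ne_zero (hw.trans_le hL_im).ne' _)

theorem existsUnique_mpMap_eq_self (hc : ∀ i, 0 ≤ c i) (hw : 0 < w.im) :
    ∃! u, 0 < u.im ∧ mpMap c p w u = u := by
  obtain ⟨u, hu, hTu⟩ := exists_mpMap_eq_self (p := p) hc hw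
  exact ⟨u, ⟨hu, hTu⟩, fun v ⟨hv, hTv⟩ => eq_of_mpMap_eq_self hc hw hv hu hTv hTu⟩

end FixedPoint

section Reduction

variable {ι : Type*} [Fintype ι]

lemma one_add_mul_ofReal_ne_zero {m : ℂ} (hm : m.im ≠ 0) (x : ℝ) : 1 + m * x ≠ 0 := by
  rcases eq_or_ne x 0 with rfl | hx
  · simp
  · intro h
    exact mul_ne_zero hm hx (by simpa using congrArg Complex.im h)

lemma im_neg_inv_pos {u : ℂ} (hu : 0 < u.im) : 0 < (-u⁻¹).im := by
  rw [neg_im, inv_im, neg_div, neg_neg]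
  exact div_pos hu (normSq_pos.mpr fun h => hu.ne' (by simp [h]))

lemma existsUnique_im_pos_neg_inv {P : ℂ → Prop} (h : ∃! u, 0 < u.im ∧ P u) :
    ∃! m, 0 < m.im ∧ P (-m⁻¹) := by
  obtain ⟨u, ⟨hu, hPu⟩, huniq⟩ := h
  refine ⟨-u⁻¹, ⟨im_neg_inv_pos hu, by rwa [inv_neg, inv_inv, neg_neg]⟩, fun m ⟨hm, hPm⟩ => ?_⟩
  rw [← huniq _ ⟨im_neg_inv_pos hm, hPm⟩, inv_neg, inv_inv, neg_neg]

/-- The substitution `u = -1/m` turns each term into `a λ + a λ² / (u - λ)`. -/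
lemma mp_equation_iff_mpMap_eq (a l : ι → ℝ) {m : ℂ} (hm : 0 < m.im) (z : ℂ) :
    z = -1 / m + ∑ i, (a i : ℂ) * (l i / (1 + m * l i)) ↔
      mpMap (fun i => a i * l i ^ 2) l (z - ∑ i, (a i : ℂ) * l i) (-m⁻¹) = -m⁻¹ := by
  have hm0 : m ≠ 0 := fun h => hm.ne' (by simp [h])
  have hterm (i : ι) : (a i : ℂ) * (l i / (1 + m * l i))
      = a i * l i + ((a i * l i ^ 2 : ℝ) : ℂ) / (-m⁻¹ - l i) := by
    rw [show -m⁻¹ - l i = -(1 + m * l i) / m by field_simp; ring, div_div_eq_mul_div, div_neg,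
      ← sub_eq_add_neg, eq_sub_iff_add_eq, mul_div_assoc', ← add_div,
      div_eq_iff (one_add_mul_ofReal_ne_zero hm.ne' (l i))]
    push_cast
    ring
  rw [sum_congr rfl fun i _ => hterm i, sum_add_distrib, mpMap, neg_div, one_div]
  constructor <;> intro h <;> linear_combination h

theorem existsUnique_mp_equation (a l : ι → ℝ) (ha : ∀ i, 0 ≤ a i) {z : ℂ} (hz : 0 < z.im) :
    ∃! m, 0 < m.im ∧ z = -1 / m + ∑ i, (a i : ℂ) * (l i / (1 + m * l i)) := by
  have hw : 0 < (z - ∑ i, (a i : ℂ) * l i).im := by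
    simpa [sub_im, im_sum] using hz
  refine (existsUnique_congr fun m => and_congr_right fun hm =>
    mp_equation_iff_mpMap_eq a l hm z).mpr
    (existsUnique_im_pos_neg_inv (P := fun u => mpMap _ l _ u = u) ?_)
  exact existsUnique_mpMap_eq_self (fun i => mul_nonneg (ha i) (sq_nonneg (l i))) hw

end Reduction

section Spectral

variable {𝕜 n : Type*} [RCLike 𝕜] [Fintype n] [DecidableEq n] {A : Matrix n n 𝕜}

lemma trace_conjStarAlgAut (U : unitary (Matrix n n 𝕜)) (X : Matrix n n 𝕜) :
    (conjStarAlgAut 𝕜 _ U X).trace = X.trace := by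
  rw [conjStarAlgAut_apply, trace_mul_cycle, coe_star_mul_self, Matrix.one_mul]

lemma one_add_smul_eq_conjStarAlgAut (hA : A.IsHermitian) (m : 𝕜) :
    1 + m • A = conjStarAlgAut 𝕜 _ hA.eigenvectorUnitary
      (diagonal fun i => 1 + m * hA.eigenvalues i) := by
  conv_lhs => rw [hA.spectral_theorem]
  rw [← map_one (conjStarAlgAut 𝕜 _ hA.eigenvectorUnitary), ← map_smul, ← map_add, ← diagonal_smul,
    ← diagonal_one, diagonal_add]
  rfl

lemma isUnit_one_add_smul (hA : A.IsHermitian) {m : 𝕜}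
    (hm : ∀ i, 1 + m * hA.eigenvalues i ≠ 0) : IsUnit (1 + m • A) := by
  rw [one_add_smul_eq_conjStarAlgAut hA]
  exact (isUnit_diagonal.mpr (Pi.isUnit_iff.mpr fun i => (hm i).isUnit)).map _

lemma trace_mul_inv_one_add_smul (hA : A.IsHermitian) {m : 𝕜}
    (hm : ∀ i, 1 + m * hA.eigenvalues i ≠ 0) :
    (A * (1 + m • A)⁻¹).trace = ∑ i, (hA.eigenvalues i : 𝕜) / (1 + m * hA.eigenvalues i) := by
  set φ := conjStarAlgAut 𝕜 _ hA.eigenvectorUnitary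
  set d : n → 𝕜 := fun i => 1 + m * hA.eigenvalues i
  have hinv : (1 + m • A)⁻¹ = φ (diagonal fun i => (d i)⁻¹) := by
    rw [one_add_smul_eq_conjStarAlgAut hA]
    exact inv_eq_left_inv (by rw [← map_mul, diagonal_mul_diagonal]; simp [d, hm])
  conv_lhs => rw [hinv, hA.spectral_theorem, ← map_mul, trace_conjStarAlgAut,
    diagonal_mul_diagonal, trace_diagonal]
  exact sum_congr rfl fun i _ => (div_eq_mul_inv _ _).symm

end Spectral

end MarcenkoPastur

open MarcenkoPastur

theorem marcenko_pastur_existence_uniqueness_general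
    (N M : ℕ)
    (F : Matrix (Fin M) (Fin M) ℝ) (hF : F.IsSymm) :
    ∀ z : ℂ, 0 < z.im →
      ∃! m : ℂ, 0 < m.im ∧
        IsUnit (1 + m • F.map ((↑) : ℝ → ℂ)) ∧
        z = -1 / m + (1 / (N : ℂ)) *
          (F.map ((↑) : ℝ → ℂ) * (1 + m • F.map ((↑) : ℝ → ℂ))⁻¹).trace := by
  intro z hz
  have hG : (F.map ((↑) : ℝ → ℂ)).IsHermitian :=
    (isHermitian_iff_isSymm.mpr hF).map _ fun x => by simp
  have hres (m : ℂ) (hm : 0 < m.im) (i : Fin M) : 1 + m * hG.eigenvalues i ≠ 0 :=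
    one_add_mul_ofReal_ne_zero hm.ne' _
  refine (existsUnique_congr fun m => and_congr_right fun hm => ?_).mp
    (existsUnique_mp_equation (fun _ => (N : ℝ)⁻¹) hG.eigenvalues (fun _ => by positivity) hz)
  rw [trace_mul_inv_one_add_smul hG (hres m hm), mul_sum]
  simp [isUnit_one_add_smul hG (hres m hm)]

/-- For a symmetric `F ∈ ℝ^{M×M}` and every `z` in the upper half-plane,
there is a unique `m` in the upper half-plane with `Id + m • F` invertible and
`z = -1/m + (1/N) Tr(F (Id + m F)⁻¹)` (the finite-`N` Marcenko–Pastur equation). -/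
theorem marcenko_pastur_existence_uniqueness
    (N M : ℕ) (hN : 0 < N) (hM : 0 < M)
    (F : Matrix (Fin M) (Fin M) ℝ) (hF : F.IsSymm) :
    ∀ z : ℂ, 0 < z.im →
      ∃! m : ℂ, 0 < m.im ∧
        IsUnit (1 + m • F.map ((↑) : ℝ → ℂ)) ∧
        z = -1 / m + (1 / (N : ℂ)) *
          (F.map ((↑) : ℝ → ℂ) * (1 + m • F.map ((↑) : ℝ → ℂ))⁻¹).trace :=
  marcenko_pastur_existence_uniqueness_general N M F hF
end

section
/- Let n, p, k, N, m_1, …, m_k be positive integers, B ∈ ℝ^{n×n} symmetric, U_r ∈ ℝ^{n×m_r}, σ_r ≥ 0, and Σ_r = σ_r²·Id_p + V_rΘ_rV_r' where V_r ∈ ℝ^{p×l_r} has orthonormal columns and Θ_r ∈ ℝ^{l_r×l_r} is diagonal. Set M = m_1+⋯+m_k, W = [σ_1U_1, …, σ_kU_k] ∈ ℝ^{n×M}, F = N·W'BW. Let z, m ∈ ℂ with m ≠ 0, Id_M + mF invertible, and z = −1/m + (1/N)·Tr(F(Id_M + mF)^{−1}), and define t_r = Tr(U_r'BU_r) − m·N·Tr(U_r'BW(Id_M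 + mF)^{−1}W'BU_r) and T(z) = z·Id_p − Σ_{r=1}^k t_r·Σ_r. Then every vector v ∈ ℂ^p with T(z)·v = 0 lies in the combined column span S of V_1, …, V_k. -/
/-!
Write `G = WᵀBW`, so `F = N G`, and `H = (1 + mF)⁻¹`. Since `WWᵀ = Σ_r σ_r² U_rU_rᵀ`, cyclicity
of the trace gives `Σ_r σ_r² t_r = Tr G − mN Tr(GHG)`, and the resolvent identity
`FH = F − m FHF` turns the defining equation of `z` into `z − Σ_r σ_r² t_r = −1/m`. Hence
`T = −(1/m) Id − Σ_r t_r V_rΘ_rV_rᵀ`, and `Tv = 0` writes `v` as a combination of columns of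
the `V_r`.
-/

open Matrix

namespace Matrix

section Blocks

variable {R : Type*} [CommRing R] {n ι : Type*} [Fintype ι] {d : ι → Type*}
  [∀ r, Fintype (d r)]

theorem mul_transpose_eq_sum_of_blocks (W : Matrix n ((r : ι) × d r) R)
    (U : (r : ι) → Matrix n (d r) R) (σ : ι → R) (hW : ∀ i a, W i a = σ a.1 * U a.1 i a.2) :
    W * Wᵀ = ∑ r, σ r ^ 2 • (U r * (U r)ᵀ) := by
  ext i j
  simp only [mul_apply, transpose_apply, hW, Fintype.sum_sigma, sum_apply, smul_apply,
    smul_eq_mul, Finset.mul_sum]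
  exact Finset.sum_congr rfl fun r _ => Finset.sum_congr rfl fun a _ => by ring

theorem sum_mul_trace_transpose_mul_mul [Fintype n] {W : Matrix n ((r : ι) × d r) R}
    {U : (r : ι) → Matrix n (d r) R} {c : ι → R}
    (hW : W * Wᵀ = ∑ r, c r • (U r * (U r)ᵀ)) (X : Matrix n n R) :
    ∑ r, c r * trace ((U r)ᵀ * X * U r) = trace (Wᵀ * X * W) := by
  calc ∑ r, c r * trace ((U r)ᵀ * X * U r) = ∑ r, c r * trace (X * (U r * (U r)ᵀ)) := by
        refine Finset.sum_congr rfl fun r _ => ?_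
        rw [trace_mul_comm, ← Matrix.mul_assoc, trace_mul_comm (U r * (U r)ᵀ)]
    _ = trace (X * (W * Wᵀ)) := by
        simp only [hW, Matrix.mul_sum, trace_sum, Matrix.mul_smul, trace_smul, smul_eq_mul]
    _ = trace (Wᵀ * X * W) := by
        rw [← Matrix.mul_assoc, trace_mul_comm, Matrix.mul_assoc]

end Blocks

theorem mul_inv_one_add_smul {K M : Type*} [Field K] [Fintype M] [DecidableEq M]
    {F : Matrix M M K} {m : K} (h : IsUnit (1 + m • F)) :
    F * (1 + m • F)⁻¹ = F - m • (F * (1 + m • F)⁻¹ * F) := by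
  have hinv : (1 + m • F)⁻¹ * (1 + m • F) = 1 :=
    nonsing_inv_mul _ ((isUnit_iff_isUnit_det _).mp h)
  have expand : F * (1 + m • F)⁻¹ * (1 + m • F)
      = F * (1 + m • F)⁻¹ + m • (F * (1 + m • F)⁻¹ * F) := by
    rw [Matrix.mul_add, Matrix.mul_one, Matrix.mul_smul]
  rw [Matrix.mul_assoc, hinv, Matrix.mul_one] at expand
  exact eq_sub_of_add_eq expand.symm

theorem map_ofReal_mul {a b c : Type*} [Fintype b] (A : Matrix a b ℝ) (C : Matrix b c ℝ) :
    (A * C).map ((↑) : ℝ → ℂ) = A.map (↑) * C.map (↑) :=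
  Matrix.map_mul (f := Complex.ofRealHom)

theorem smul_one_sub_sum_smul_smul_one_add {R p ι : Type*} [CommRing R] [Fintype p]
    [DecidableEq p] [Fintype ι] (z : R) (t s : ι → R) (Q : ι → Matrix p p R) :
    z • 1 - ∑ r, t r • (s r • 1 + Q r) = (z - ∑ r, s r * t r) • 1 - ∑ r, t r • Q r := by
  simp only [smul_add, Finset.sum_add_distrib, smul_smul, sub_smul, Finset.sum_smul, mul_comm]
  abel

theorem mem_iSup_range_mulVecLin_of_mulVec_eq_zero {K p ι : Type*} [Field K] [Fintype p]
    [DecidableEq p] [Fintype ι] {l : ι → Type*} [∀ r, Fintype (l r)]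
    (P : (r : ι) → Matrix p (l r) K) (A : (r : ι) → Matrix (l r) p K) (t : ι → K) {c : K}
    (hc : c ≠ 0) {v : p → K} (hv : (c • 1 - ∑ r, t r • (P r * A r)) *ᵥ v = 0) :
    v ∈ ⨆ r, LinearMap.range (P r).mulVecLin := by
  have hcv : c • v = ∑ r, t r • P r *ᵥ (A r *ᵥ v) := by
    rw [sub_mulVec, sum_mulVec, sub_eq_zero] at hv
    simpa only [smul_mulVec, one_mulVec, mulVec_mulVec] using hv
  rw [← inv_smul_smul₀ hc v, hcv]
  exact Submodule.smul_mem _ _ <| Submodule.sum_mem _ fun r _ =>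
    Submodule.smul_mem _ _ <| Submodule.mem_iSup_of_mem r ⟨_, rfl⟩

end Matrix

theorem sub_sum_mul_eq_neg_inv {K n ι : Type*} [Field K] [Fintype n] [Fintype ι]
    {d : ι → Type*} [∀ r, Fintype (d r)] [DecidableEq ((r : ι) × d r)]
    {W : Matrix n ((r : ι) × d r) K} {U : (r : ι) → Matrix n (d r) K}
    {c : ι → K} (hW : W * Wᵀ = ∑ r, c r • (U r * (U r)ᵀ)) {B : Matrix n n K}
    {F : Matrix ((r : ι) × d r) ((r : ι) × d r) K} {N z m : K} {t : ι → K} (hN : N ≠ 0)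
    (hinv : IsUnit (1 + m • F)) (hF : F = N • (Wᵀ * B * W))
    (hz : z = -1 / m + 1 / N * trace (F * (1 + m • F)⁻¹))
    (ht : ∀ r, t r = trace ((U r)ᵀ * B * U r)
      - m * N * trace ((U r)ᵀ * B * W * (1 + m • F)⁻¹ * (Wᵀ * B * U r))) :
    z - ∑ r, c r * t r = -1 / m := by
  have hres := mul_inv_one_add_smul hinv
  set H := (1 + m • F)⁻¹
  clear_value H
  subst hF
  have hsum : ∑ r, c r * t r
      = trace (Wᵀ * B * W) - m * N * trace (Wᵀ * B * W * H * (Wᵀ * B * W)) := by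
    have hsecond : ∑ r, c r * trace ((U r)ᵀ * B * W * H * (Wᵀ * B * U r))
        = trace (Wᵀ * B * W * H * (Wᵀ * B * W)) := by
      convert sum_mul_trace_transpose_mul_mul hW (B * W * H * Wᵀ * B) using 1 <;>
        simp only [Matrix.mul_assoc]
    rw [← sum_mul_trace_transpose_mul_mul hW B, ← hsecond, Finset.mul_sum,
      ← Finset.sum_sub_distrib]
    exact Finset.sum_congr rfl fun r _ => by rw [ht r]; ring
  rw [hz, hres, hsum]
  simp only [Matrix.smul_mul, Matrix.mul_smul, trace_sub, trace_smul, smul_eq_mul]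
  field_simp
  ring

theorem kernel_of_T_subset_span_general
    (n p k N : ℕ) (hN : 0 < N)
    (m_ : Fin k → ℕ)
    (B : Matrix (Fin n) (Fin n) ℝ)
    (U : (r : Fin k) → Matrix (Fin n) (Fin (m_ r)) ℝ)
    (σ : Fin k → ℝ)
    (l : Fin k → ℕ)
    (V : (r : Fin k) → Matrix (Fin p) (Fin (l r)) ℝ)
    (Θ : (r : Fin k) → Matrix (Fin (l r)) (Fin (l r)) ℝ)
    (Sig : (r : Fin k) → Matrix (Fin p) (Fin p) ℝ)
    (hSig : ∀ r, Sig r = (σ r) ^ 2 • (1 : Matrix (Fin p) (Fin p) ℝ) + V r * Θ r * (V r)ᵀ)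
    (W : Matrix (Fin n) ((r : Fin k) × Fin (m_ r)) ℝ)
    (hW : ∀ i a, W i a = σ a.1 * U a.1 i a.2)
    (F : Matrix ((r : Fin k) × Fin (m_ r)) ((r : Fin k) × Fin (m_ r)) ℂ)
    (hF : F = (N : ℂ) • ((Wᵀ * B * W).map ((↑) : ℝ → ℂ)))
    (z m : ℂ) (hm0 : m ≠ 0)
    (hinv : IsUnit (1 + m • F))
    (hMP : z = -1 / m + (1 / (N : ℂ)) * (F * (1 + m • F)⁻¹).trace)
    (t : Fin k → ℂ)
    (ht : ∀ r, t r = (((U r)ᵀ * B * U r).map ((↑) : ℝ → ℂ)).trace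
        - m * N * (((U r)ᵀ * B * W).map ((↑) : ℝ → ℂ) * (1 + m • F)⁻¹
            * ((Wᵀ * B * U r).map ((↑) : ℝ → ℂ))).trace)
    (T : Matrix (Fin p) (Fin p) ℂ)
    (hT : T = z • (1 : Matrix (Fin p) (Fin p) ℂ) - ∑ r, t r • (Sig r).map ((↑) : ℝ → ℂ)) :
    ∀ v : Fin p → ℂ, T.mulVec v = 0 →
      v ∈ Submodule.span ℂ
        {w : Fin p → ℂ | ∃ (r : Fin k) (j : Fin (l r)), w = fun i => ((V r i j : ℝ) : ℂ)} := by
  intro v hv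
  have hscalar : z - ∑ r, (σ r : ℂ) ^ 2 * t r = -1 / m := by
    refine sub_sum_mul_eq_neg_inv (W := W.map (↑)) (U := fun r => (U r).map (↑))
      (B := B.map (↑)) (mul_transpose_eq_sum_of_blocks _ _ _ fun i a => ?_)
      (Nat.cast_ne_zero.mpr hN.ne') hinv ?_ hMP fun r => ?_
    · simp [hW]
    · simp only [hF, map_ofReal_mul, transpose_map]; rfl
    · simp only [ht r, map_ofReal_mul, transpose_map]; rfl
  have hSigC : ∀ r, (Sig r).map ((↑) : ℝ → ℂ)
      = (σ r : ℂ) ^ 2 • 1 + (V r).map (↑) * (Θ r * (V r)ᵀ).map (↑) := by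
    intro r
    rw [← map_ofReal_mul, ← Matrix.mul_assoc, hSig]
    ext i j
    by_cases h : i = j <;> simp [one_apply, h]
  have hT_eq : T = (-1 / m) • 1 - ∑ r, t r • ((V r).map (↑) * (Θ r * (V r)ᵀ).map (↑)) := by
    rw [hT, ← hscalar, ← smul_one_sub_sum_smul_smul_one_add]
    simp only [hSigC]
  rw [hT_eq] at hv
  have hmem := mem_iSup_range_mulVecLin_of_mulVec_eq_zero _ _ t
    (div_ne_zero (neg_ne_zero.mpr one_ne_zero) hm0) hv
  refine SetLike.le_def.mp (iSup_le fun r => ?_) hmem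
  rw [range_mulVecLin]
  exact Submodule.span_mono fun _ ⟨j, hj⟩ => ⟨r, j, hj.symm⟩

/-- Proposition 2.4(b): every vector in the kernel of
`T(z) = z·Id − Σ_r t_r Σ_r` lies in the combined column span of `V_1, …, V_k`. -/
theorem kernel_of_T_subset_span
    (n p k N : ℕ) (hn : 0 < n) (hp : 0 < p) (hk : 0 < k) (hN : 0 < N)
    (m_ : Fin k → ℕ) (hm : ∀ r, 0 < m_ r)
    (B : Matrix (Fin n) (Fin n) ℝ) (hB : B.IsSymm)
    (U : (r : Fin k) → Matrix (Fin n) (Fin (m_ r)) ℝ)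
    (σ : Fin k → ℝ) (hσ : ∀ r, 0 ≤ σ r)
    (l : Fin k → ℕ)
    (V : (r : Fin k) → Matrix (Fin p) (Fin (l r)) ℝ)
    (hV : ∀ r, (V r)ᵀ * V r = 1)
    (Θ : (r : Fin k) → Matrix (Fin (l r)) (Fin (l r)) ℝ)
    (hΘ : ∀ r, (Θ r).IsDiag)
    (Sig : (r : Fin k) → Matrix (Fin p) (Fin p) ℝ)
    (hSig : ∀ r, Sig r = (σ r) ^ 2 • (1 : Matrix (Fin p) (Fin p) ℝ) + V r * Θ r * (V r)ᵀ)
    (W : Matrix (Fin n) ((r : Fin k) × Fin (m_ r)) ℝ)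
    (hW : ∀ i a, W i a = σ a.1 * U a.1 i a.2)
    (F : Matrix ((r : Fin k) × Fin (m_ r)) ((r : Fin k) × Fin (m_ r)) ℂ)
    (hF : F = (N : ℂ) • ((Wᵀ * B * W).map ((↑) : ℝ → ℂ)))
    (z m : ℂ) (hm0 : m ≠ 0)
    (hinv : IsUnit (1 + m • F))
    (hMP : z = -1 / m + (1 / (N : ℂ)) * (F * (1 + m • F)⁻¹).trace)
    (t : Fin k → ℂ)
    (ht : ∀ r, t r = (((U r)ᵀ * B * U r).map ((↑) : ℝ → ℂ)).trace
        - m * N * (((U r)ᵀ * B * W).map ((↑) : ℝ → ℂ) * (1 + m • F)⁻¹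
            * ((Wᵀ * B * U r).map ((↑) : ℝ → ℂ))).trace)
    (T : Matrix (Fin p) (Fin p) ℂ)
    (hT : T = z • (1 : Matrix (Fin p) (Fin p) ℂ) - ∑ r, t r • (Sig r).map ((↑) : ℝ → ℂ)) :
    ∀ v : Fin p → ℂ, T.mulVec v = 0 →
      v ∈ Submodule.span ℂ
        {w : Fin p → ℂ | ∃ (r : Fin k) (j : Fin (l r)), w = fun i => ((V r i j : ℝ) : ℂ)} :=
  kernel_of_T_subset_span_general n p k N hN m_ B U σ l V Θ Sig hSig W hW F hF z m hm0 hinv hMP t ht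
    T hT
end

section
/- Let μ0 be a probability measure on ℝ, let N, M, k, n, m_1, …, m_k, p be positive integers, B ∈ ℝ^{n×n} symmetric, U_r ∈ ℝ^{n×m_r}, σ_r ≥ 0, W = [σ_1U_1, …, σ_kU_k] ∈ ℝ^{n×M}, F = N·W'BW, and let Σ_1, …, Σ_k ∈ ℝ^{p×p} be positive semidefinite. For λ ∈ ℝ∖supp(μ0) set m0(λ) = ∫_ℝ (x − λ)^{−1} dμ0(x), and assume that for every λ ∈ ℝ∖supp(μ0) the matrix Id_M + m0(λ)F is invertible and λ = −1/m0(λ) + (1/N)·Tr(F(Id_M + m0(λ)F)^{−1}). Define t_r(λ) = Tr(U_r'BU_r) − m0(λ)·N·Tr(U_r'BW(Id_M + m0(λ)F)^{−1}W'BU_r) and T(λ) = λ·Id_p − Σ_{r=1}^k t_r(λ)·Σ_r. Then λ ↦ T(λ) is differentiable on ℝ∖supp(μ0), and for every λ ∈ ℝ∖supp(μ0) the symmetric matrix T'(λ) − Id_p is positive semidefinite. -/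
/-!
Off the support of `μ0` the Stieltjes transform `m0` is differentiable with
`m0' = ∫ (x - λ)⁻² dμ0 ≥ 0`. Writing `X(s) = (1 + s F)⁻¹` and `A_r = U_rᵀ B W`,
one has
`t_r(λ) = Tr(U_rᵀ B U_r) - N Tr(A_r (m0(λ) X(m0(λ))) A_rᵀ)`, and the resolvent identity
`X (1 + s F) X = X` gives `d/ds (s X(s)) = X(s)²`. Hence
`t_r'(λ) = -N m0'(λ) Tr((A_r X)(A_r X)ᵀ) ≤ 0` because `X` is symmetric, and
`T'(λ) - 1 = -∑ t_r'(λ) Σ_r` is a nonnegative combination of positive semidefinite matrices.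
-/

open Matrix MeasureTheory

/-- The closed support of a measure on `ℝ`. -/
def msupp (μ : Measure ℝ) : Set ℝ := {x : ℝ | ∀ ε > 0, 0 < μ (Metric.ball x ε)}

lemma exists_pos_ae_le_abs_sub_of_notMem_msupp {μ : Measure ℝ} {lam : ℝ}
    (h : lam ∉ msupp μ) : ∃ ε > 0, ∀ᵐ x ∂μ, ε ≤ |x - lam| := by
  simp only [msupp, Set.mem_ofPred_eq, not_forall, not_lt, nonpos_iff_eq_zero] at h
  obtain ⟨ε, hε, hball⟩ := h
  refine ⟨ε, hε, (measure_eq_zero_iff_ae_notMem.1 hball).mono fun x hx => ?_⟩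
  simpa [Real.dist_eq] using hx

lemma hasDerivAt_integral_inv_sub {μ : Measure ℝ} [IsFiniteMeasure μ] {lam : ℝ}
    (h : lam ∉ msupp μ) :
    HasDerivAt (fun l => ∫ x, (x - l)⁻¹ ∂μ) (∫ x, ((x - lam) ^ 2)⁻¹ ∂μ) lam := by
  obtain ⟨ε, hε, hfar⟩ := exists_pos_ae_le_abs_sub_of_notMem_msupp h
  have hfar_ball : ∀ᵐ x ∂μ, ∀ l ∈ Metric.ball lam (ε / 2), ε / 2 ≤ |x - l| := by
    filter_upwards [hfar] with x hx l hl
    rw [Metric.mem_ball, Real.dist_eq] at hl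
    linarith [abs_sub_le x l lam]
  have hmeas : ∀ l : ℝ, AEStronglyMeasurable (fun x : ℝ => (x - l)⁻¹) μ := fun l =>
    (measurable_id.sub_const l).inv.aestronglyMeasurable
  have hint : Integrable (fun x => (x - lam)⁻¹) μ := by
    refine (integrable_const ε⁻¹).mono' (hmeas lam) ?_
    filter_upwards [hfar] with x hx
    rw [Real.norm_eq_abs, abs_inv]
    exact inv_anti₀ hε hx
  refine (hasDerivAt_integral_of_dominated_loc_of_deriv_le (F' := fun l x => ((x - l) ^ 2)⁻¹)
    (bound := fun _ => ((ε / 2) ^ 2)⁻¹)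
    (Metric.ball_mem_nhds lam (half_pos hε)) (.of_forall hmeas) hint
    ((measurable_id.sub_const lam).pow_const 2).inv.aestronglyMeasurable ?_
    (integrable_const _) ?_).2
  · filter_upwards [hfar_ball] with x hx l hl
    rw [Real.norm_eq_abs, abs_of_nonneg (by positivity), ← sq_abs]
    exact inv_anti₀ (by positivity) (pow_le_pow_left₀ (by positivity) (hx l hl) 2)
  · filter_upwards [hfar_ball] with x hx l hl
    have hne : x - l ≠ 0 := abs_pos.1 ((half_pos hε).trans_le (hx l hl))
    have hinv := ((hasDerivAt_id' l).const_sub x).inv hne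
    rw [neg_neg, one_div] at hinv
    exact hinv

namespace Matrix

section Resolvent

open scoped Norms.Operator

variable {ι : Type*} [Fintype ι] [DecidableEq ι]

lemma hasDerivAt_inv_of_isUnit {A : ℝ → Matrix ι ι ℝ} {A' : Matrix ι ι ℝ} {s : ℝ}
    (hA : HasDerivAt A A' s) (hunit : IsUnit (A s)) :
    HasDerivAt (fun s => (A s)⁻¹) (-((A s)⁻¹ * A' * (A s)⁻¹)) s := by
  have hring := hasFDerivAt_ringInverse (𝕜 := ℝ) hunit.unit
  rw [hunit.unit_spec] at hring
  have hinv := hring.comp_hasDerivAt s hA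
  simp only [Function.comp_def, ← nonsing_inv_eq_ringInverse] at hinv
  refine hinv.congr_deriv ?_
  simp [← nonsing_inv_eq_ringInverse, ← Ring.inverse_unit]

lemma hasDerivAt_smul_inv_one_add_smul (F : Matrix ι ι ℝ) {s : ℝ}
    (h : IsUnit (1 + s • F)) :
    HasDerivAt (fun s : ℝ => s • (1 + s • F)⁻¹) ((1 + s • F)⁻¹ * (1 + s • F)⁻¹) s := by
  have hlin : HasDerivAt (fun s : ℝ => 1 + s • F) F s := by
    have := ((hasDerivAt_id s).smul_const F).const_add (1 : Matrix ι ι ℝ)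
    rwa [one_smul] at this
  refine ((hasDerivAt_id' s).smul (hasDerivAt_inv_of_isUnit hlin h)).congr_deriv ?_
  set X := (1 + s • F)⁻¹
  have hXX : X * (1 + s • F) * X = X := by
    rw [Matrix.mul_assoc, mul_nonsing_inv _ ((isUnit_iff_isUnit_det _).1 h), Matrix.mul_one]
  rw [Matrix.mul_add, Matrix.add_mul, Matrix.mul_one, Matrix.mul_smul, Matrix.smul_mul]
    at hXX
  rw [one_smul, smul_neg, neg_add_eq_sub, sub_eq_iff_eq_add, hXX]

lemma hasDerivAt_mul_trace_mul_inv_one_add_smul_mul {κ : Type*} [Fintype κ]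
    (A : Matrix κ ι ℝ) (C : Matrix ι κ ℝ) (F : Matrix ι ι ℝ) {m : ℝ → ℝ} {m' lam : ℝ}
    (hm : HasDerivAt m m' lam) (h : IsUnit (1 + m lam • F)) :
    HasDerivAt (fun l => m l * (A * (1 + m l • F)⁻¹ * C).trace)
      (m' * (A * ((1 + m lam • F)⁻¹ * (1 + m lam • F)⁻¹) * C).trace) lam := by
  let L : Matrix ι ι ℝ →L[ℝ] ℝ := LinearMap.toContinuousLinearMap
    (traceLinearMap κ ℝ ℝ ∘ₗ mulLeftLinearMap κ ℝ A ∘ₗ mulRightLinearMap ι ℝ C)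
  have hL : ∀ X, L X = (A * X * C).trace := fun X => by simp [L, Matrix.mul_assoc]
  have hcomp := L.hasFDerivAt.comp_hasDerivAt lam
    ((hasDerivAt_smul_inv_one_add_smul F h).scomp lam hm)
  simp only [Function.comp_def, L.map_smul, hL, smul_eq_mul] at hcomp
  exact hcomp.congr_deriv ((L.map_smul m' _).trans (congrArg (m' * ·) (hL _)))

end Resolvent

lemma IsSymm.transpose_mul_mul {α m n : Type*} [CommSemiring α] [Fintype n]
    {B : Matrix n n α} (hB : B.IsSymm) (W : Matrix n m α) : (Wᵀ * B * W).IsSymm := by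
  rw [IsSymm, transpose_mul, transpose_mul, hB.eq, transpose_transpose, Matrix.mul_assoc]

lemma trace_mul_mul_self_mul_transpose_nonneg {κ ι : Type*} [Fintype κ] [Fintype ι]
    (A : Matrix κ ι ℝ) {X : Matrix ι ι ℝ} (hX : X.IsSymm) :
    0 ≤ (A * (X * X) * Aᵀ).trace := by
  have hsq : A * (X * X) * Aᵀ = A * X * (A * X)ᴴ := by
    rw [conjTranspose_eq_transpose_of_trivial, transpose_mul, hX.eq, Matrix.mul_assoc,
      Matrix.mul_assoc, Matrix.mul_assoc]
  rw [hsq]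
  exact (posSemidef_self_mul_conjTranspose _).trace_nonneg

lemma hasDerivAt_smul_one_sub_sum_smul_apply {ι κ : Type*} [Fintype ι] [DecidableEq κ]
    {t : ι → ℝ → ℝ} {t' : ι → ℝ} {lam : ℝ} (ht : ∀ r, HasDerivAt (t r) (t' r) lam)
    (S : ι → Matrix κ κ ℝ) (i j : κ) :
    HasDerivAt (fun l => (l • (1 : Matrix κ κ ℝ) - ∑ r, t r l • S r) i j)
      ((1 - ∑ r, t' r • S r) i j) lam := by
  simp only [sub_apply, smul_apply, sum_apply, smul_eq_mul]
  refine (((hasDerivAt_id' lam).mul_const _).sub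
    (HasDerivAt.fun_sum fun r _ => (ht r).mul_const (S r i j))).congr_deriv ?_
  simp

end Matrix
theorem derivative_of_T_minus_id_posSemidef_general
    (μ0 : Measure ℝ) (hμ0 : IsProbabilityMeasure μ0)
    (N k n p : ℕ)
    (m_ : Fin k → ℕ)
    (B : Matrix (Fin n) (Fin n) ℝ) (hB : B.IsSymm)
    (U : (r : Fin k) → Matrix (Fin n) (Fin (m_ r)) ℝ)
    (W : Matrix (Fin n) ((r : Fin k) × Fin (m_ r)) ℝ)
    (F : Matrix ((r : Fin k) × Fin (m_ r)) ((r : Fin k) × Fin (m_ r)) ℝ)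
    (hF : F = (N : ℝ) • (Wᵀ * B * W))
    (Sig : (r : Fin k) → Matrix (Fin p) (Fin p) ℝ)
    (hSig : ∀ r, (Sig r).PosSemidef)
    (m0 : ℝ → ℝ) (hm0 : ∀ lam, m0 lam = ∫ x, (x - lam)⁻¹ ∂μ0)
    (hMP : ∀ lam ∉ msupp μ0,
      IsUnit (1 + m0 lam • F) ∧
      lam = -1 / m0 lam + (1 / (N : ℝ)) * (F * (1 + m0 lam • F)⁻¹).trace)
    (t : Fin k → ℝ → ℝ)
    (ht : ∀ r lam, t r lam = ((U r)ᵀ * B * U r).trace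
        - m0 lam * N * ((U r)ᵀ * B * W * (1 + m0 lam • F)⁻¹ * (Wᵀ * B * U r)).trace)
    (T : ℝ → Matrix (Fin p) (Fin p) ℝ)
    (hT : ∀ lam, T lam = lam • (1 : Matrix (Fin p) (Fin p) ℝ) - ∑ r, t r lam • Sig r) :
    ∃ T' : ℝ → Matrix (Fin p) (Fin p) ℝ,
      ∀ lam ∉ msupp μ0,
        (∀ i j, HasDerivAt (fun l => T l i j) (T' lam i j) lam) ∧
        (T' lam - 1).PosSemidef := by
  let A r := (U r)ᵀ * B * W
  let X lam := (1 + m0 lam • F)⁻¹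
  let dm0 lam := ∫ x, ((x - lam) ^ 2)⁻¹ ∂μ0
  let t' r lam := -(N * (dm0 lam * (A r * (X lam * X lam) * (A r)ᵀ).trace))
  refine ⟨fun lam => 1 - ∑ r, t' r lam • Sig r, fun lam hlam => ⟨fun i j => ?_, ?_⟩⟩
  · have hm0' : HasDerivAt m0 (dm0 lam) lam := by
      rw [funext hm0]
      exact hasDerivAt_integral_inv_sub hlam
    have ht' r : HasDerivAt (t r) (t' r lam) lam := by
      have hAt : (A r)ᵀ = Wᵀ * B * U r := by simp [A, transpose_mul, hB.eq, Matrix.mul_assoc]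
      have ht_eq : t r = fun l => ((U r)ᵀ * B * U r).trace
          - N * (m0 l * (A r * (1 + m0 l • F)⁻¹ * (A r)ᵀ).trace) := by
        ext l
        rw [ht, hAt]
        ring
      rw [ht_eq]
      exact ((hasDerivAt_mul_trace_mul_inv_one_add_smul_mul (A r) (A r)ᵀ F hm0'
        (hMP lam hlam).1).const_mul (N : ℝ)).const_sub _
    simp only [hT]
    exact hasDerivAt_smul_one_sub_sum_smul_apply ht' Sig i j
  · have hFsymm : F.IsSymm := hF ▸ (hB.transpose_mul_mul W).smul _
    have hXsymm : (X lam).IsSymm := (isSymm_one.add (hFsymm.smul _)).inv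
    rw [sub_sub_cancel_left, ← Finset.sum_neg_distrib]
    refine posSemidef_sum _ fun r _ => ?_
    rw [← neg_smul, neg_neg]
    refine (hSig r).smul (mul_nonneg N.cast_nonneg (mul_nonneg ?_ ?_))
    · exact integral_nonneg fun x => by positivity
    · exact trace_mul_mul_self_mul_transpose_nonneg (A r) hXsymm

/-- Proposition 2.4(c): `λ ↦ T(λ)` is differentiable on `ℝ ∖ supp(μ0)`
and `T'(λ) − Id` is positive semidefinite there. -/
theorem derivative_of_T_minus_id_posSemidef
    (μ0 : Measure ℝ) (hμ0 : IsProbabilityMeasure μ0)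
    (N M k n p : ℕ) (hN : 0 < N) (hM : 0 < M) (hk : 0 < k) (hn : 0 < n) (hp : 0 < p)
    (m_ : Fin k → ℕ) (hm : ∀ r, 0 < m_ r)
    (B : Matrix (Fin n) (Fin n) ℝ) (hB : B.IsSymm)
    (U : (r : Fin k) → Matrix (Fin n) (Fin (m_ r)) ℝ)
    (σ : Fin k → ℝ) (hσ : ∀ r, 0 ≤ σ r)
    (W : Matrix (Fin n) ((r : Fin k) × Fin (m_ r)) ℝ)
    (hW : ∀ i a, W i a = σ a.1 * U a.1 i a.2)
    (F : Matrix ((r : Fin k) × Fin (m_ r)) ((r : Fin k) × Fin (m_ r)) ℝ)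
    (hF : F = (N : ℝ) • (Wᵀ * B * W))
    (Sig : (r : Fin k) → Matrix (Fin p) (Fin p) ℝ)
    (hSig : ∀ r, (Sig r).PosSemidef)
    (m0 : ℝ → ℝ) (hm0 : ∀ lam, m0 lam = ∫ x, (x - lam)⁻¹ ∂μ0)
    (hMP : ∀ lam ∉ msupp μ0,
      IsUnit (1 + m0 lam • F) ∧
      lam = -1 / m0 lam + (1 / (N : ℝ)) * (F * (1 + m0 lam • F)⁻¹).trace)
    (t : Fin k → ℝ → ℝ)
    (ht : ∀ r lam, t r lam = ((U r)ᵀ * B * U r).trace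
        - m0 lam * N * ((U r)ᵀ * B * W * (1 + m0 lam • F)⁻¹ * (Wᵀ * B * U r)).trace)
    (T : ℝ → Matrix (Fin p) (Fin p) ℝ)
    (hT : ∀ lam, T lam = lam • (1 : Matrix (Fin p) (Fin p) ℝ) - ∑ r, t r lam • Sig r) :
    ∃ T' : ℝ → Matrix (Fin p) (Fin p) ℝ,
      ∀ lam ∉ msupp μ0,
        (∀ i j, HasDerivAt (fun l => T l i j) (T' lam i j) lam) ∧
        (T' lam - 1).PosSemidef :=
  derivative_of_T_minus_id_posSemidef_general μ0 hμ0 N k n p m_ B hB U W F hF Sig hSig m0 hm0 hMP t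
    ht T hT
end

section
/- Combinatorial bound for products of matrix entries (Lemma A.4): Fix an integer ℓ ≥ 1. There is a constant C_ℓ > 0 depending only on ℓ such that the following holds for every n ≥ 1. For each a = 1, …, ℓ, let B_a ∈ ℝ^{n×n} satisfy B_a[i,j] ≥ 0 for all i,j, B_a[i,i] = 0 for all i, and ‖B_a‖_HS ≤ 1. For a tuple (i,j) = (i_1,…,i_ℓ, j_1,…,j_ℓ) ∈ {1,…,n}^{2ℓ}, let s(i,j) denote the number of elements of {1,…,n} appearing exactly once among the 2ℓ coordinates of (i,j). Then for every s ∈ {0, 1, …, 2ℓ}: Σ over all (i,j) ∈ {1,…,n}^{2ℓ} with s(i,j) = s of ∏_{a=1}^ℓ B_a[i_a, j_a] ≤ C_ℓ·n^{s/2}. -/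
/-!
Group the index tuples by their equality pattern, an equivalence relation `R` on the `2ℓ` slots;
the number of patterns depends only on `ℓ`. For a fixed `R`, drop the requirement that distinct
classes receive distinct labels: the sum becomes a sum over labellings `ψ` of the classes of a
product of entries `B a (ψ ⟦i_a⟧) (ψ ⟦j_a⟧)` along the edges of a multigraph on the classes, and it
vanishes if some edge is a loop, since the `B a` have zero diagonal. Attaching the all-ones vector
(of `ℓ²`-norm `√n`) to each of the `s` vertices of degree one makes every degree at least two.
Summing out the vertices one at a time, each by the Cauchy–Schwarz inequality
`∑ i, ∏ k, g k i ≤ ∏ k, ‖g k‖₂` for at least two nonnegative factors, then bounds the sum by the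
product of the norms, which is at most `n ^ (s / 2)`.
-/

open Finset

theorem sum_prod_le_prod_sqrt_sum_sq {ι α : Type*} [Fintype α] {I : Finset ι} (hI : 1 < #I)
    (g : ι → α → ℝ) (hg : ∀ k ∈ I, ∀ i, 0 ≤ g k i) :
    ∑ i, ∏ k ∈ I, g k i ≤ ∏ k ∈ I, √(∑ i, g k i ^ 2) := by
  classical
  obtain ⟨k₁, hk₁, k₂, hk₂, hne⟩ := one_lt_card.mp hI
  have hk₂' : k₂ ∈ I.erase k₁ := mem_erase.mpr ⟨hne.symm, hk₂⟩
  set J := (I.erase k₁).erase k₂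
  have hJ : ∀ k ∈ J, k ∈ I := fun k hk => mem_of_mem_erase (mem_of_mem_erase hk)
  have hsplit : ∀ h : ι → ℝ, ∏ k ∈ I, h k = h k₁ * h k₂ * ∏ k ∈ J, h k := fun h => by
    rw [mul_assoc, mul_prod_erase _ _ hk₂', mul_prod_erase _ _ hk₁]
  have hle : ∀ k ∈ I, ∀ i, g k i ≤ √(∑ j, g k j ^ 2) := fun k _ i =>
    (le_abs_self _).trans (Real.abs_le_sqrt (single_le_sum (fun j _ => sq_nonneg (g k j))
      (mem_univ i)))
  calc ∑ i, ∏ k ∈ I, g k i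
      ≤ ∑ i, g k₁ i * g k₂ i * ∏ k ∈ J, √(∑ j, g k j ^ 2) := by
        refine sum_le_sum fun i _ => ?_
        rw [hsplit fun k => g k i]
        exact mul_le_mul_of_nonneg_left
          (prod_le_prod (fun k hk => hg k (hJ k hk) i) (fun k hk => hle k (hJ k hk) i))
          (mul_nonneg (hg k₁ hk₁ i) (hg k₂ hk₂ i))
    _ ≤ √(∑ i, g k₁ i ^ 2) * √(∑ i, g k₂ i ^ 2) * ∏ k ∈ J, √(∑ j, g k j ^ 2) := by
        rw [← sum_mul]
        exact mul_le_mul_of_nonneg_right (Real.sum_mul_le_sqrt_mul_sqrt _ _ _)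
          (prod_nonneg fun _ _ => Real.sqrt_nonneg _)
    _ = ∏ k ∈ I, √(∑ i, g k i ^ 2) := (hsplit fun k => √(∑ i, g k i ^ 2)).symm

theorem sum_sum_update_eq_card_smul {V α M : Type*} [Fintype V] [DecidableEq V] [Fintype α]
    [AddCommMonoid M] (x : V) (G : (V → α) → M) :
    ∑ φ, ∑ i, G (Function.update φ x i) = Fintype.card α • ∑ φ, G φ := by
  let swap : (V → α) × α → (V → α) × α := fun p => (Function.update p.1 x p.2, p.1 x)
  have hswap : Function.Involutive swap := fun p => by simp [swap]
  rw [← Fintype.sum_prod_type', Fintype.sum_equiv hswap.toPerm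
    (fun p => G (Function.update p.1 x p.2)) (fun p => G p.1) fun _ => rfl, Fintype.sum_prod_type]
  simp [smul_sum]

/-- A factor of a weight on labellings `φ : V → α`, depending on at most two labels. -/
inductive Factor (V α : Type*) where
  | const (c : ℝ)
  | vec (v : V) (f : α → ℝ)
  | mat (u w : V) (M : Matrix α α ℝ)

namespace Factor

variable {V α : Type*}

def eval : Factor V α → (V → α) → ℝ
  | const c, _ => c
  | vec v f, φ => f (φ v)
  | mat u w M, φ => M (φ u) (φ w)

def Incident (x : V) : Factor V α → Prop
  | const _ => False
  | vec v _ => v = x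
  | mat u w _ => u = x ∨ w = x

def Nonneg : Factor V α → Prop
  | const c => 0 ≤ c
  | vec _ f => ∀ i, 0 ≤ f i
  | mat _ _ M => ∀ i j, 0 ≤ M i j

def Loopless : Factor V α → Prop
  | mat u w _ => u ≠ w
  | _ => True

theorem Nonneg.eval_nonneg {F : Factor V α} (hF : F.Nonneg) (φ : V → α) : 0 ≤ F.eval φ := by
  cases F <;> simp only [eval] <;> first | exact hF | exact hF _ | exact hF _ _

theorem eval_update_of_not_incident [DecidableEq V] {x : V} {F : Factor V α}
    (hx : ¬F.Incident x) (φ : V → α) (i : α) :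
    F.eval (Function.update φ x i) = F.eval φ := by
  cases F with
  | const c => rfl
  | vec v f => simp only [Incident] at hx; simp [eval, Function.update_of_ne hx]
  | mat u w M =>
    simp only [Incident, not_or] at hx
    simp [eval, Function.update_of_ne hx.1, Function.update_of_ne hx.2]

instance [DecidableEq V] (x : V) : ∀ F : Factor V α, Decidable (F.Incident x)
  | const _ => isFalse id
  | vec v _ => inferInstanceAs (Decidable (v = x))
  | mat u w _ => inferInstanceAs (Decidable (u = x ∨ w = x))

variable [Fintype α]

noncomputable def norm : Factor V α → ℝ
  | const c => c
  | vec _ f => √(∑ i, f i ^ 2)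
  | mat _ _ M => √(∑ i, ∑ j, M i j ^ 2)

theorem eval_eq_norm_of_forall_not_incident {F : Factor V α} (hF : F.Nonneg)
    (h : ∀ x, ¬F.Incident x) (φ : V → α) : F.eval φ = F.norm := by
  cases F with
  | const c => rfl
  | vec v f => exact (h v rfl).elim
  | mat u w M => exact (h u (Or.inl rfl)).elim

variable [DecidableEq V]

/-- The factor left after summing out the label of `x` by Cauchy–Schwarz: a factor at `x` is
replaced by the `ℓ²`-norm of its slice through `x`. -/
noncomputable def contract (x : V) : Factor V α → Factor V α
  | const c => const c
  | vec v f => if v = x then const √(∑ i, f i ^ 2) else vec v f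
  | mat u w M =>
    if u = x then vec w fun j => √(∑ i, M i j ^ 2)
    else if w = x then vec u fun i => √(∑ j, M i j ^ 2) else mat u w M

section

variable {x : V} {F : Factor V α}

theorem contract_of_not_incident (hx : ¬F.Incident x) : F.contract x = F := by
  cases F with
  | const c => rfl
  | vec v f => simp only [Incident] at hx; simp [contract, hx]
  | mat u w M => simp only [Incident, not_or] at hx; simp [contract, hx]

theorem sqrt_sum_sq_eval_update (hx : F.Incident x) (hF : F.Loopless) (φ : V → α) :
    √(∑ i, F.eval (Function.update φ x i) ^ 2) = (F.contract x).eval φ := by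
  cases F with
  | const c => exact hx.elim
  | vec v f => simp only [Incident] at hx; subst hx; simp [eval, contract]
  | mat u w M =>
    simp only [Loopless] at hF
    rcases hx with rfl | rfl
    · simp [eval, contract, Function.update_of_ne hF.symm]
    · simp [eval, contract, hF]

theorem norm_contract (x : V) (F : Factor V α) : (F.contract x).norm = F.norm := by
  cases F with
  | const c => rfl
  | vec v f => by_cases h : v = x <;> simp [contract, norm, h]
  | mat u w M =>
    by_cases hu : u = x
    · simp only [contract, hu, if_true, norm]
      rw [sum_comm]
      simp [Real.sq_sqrt, sum_nonneg, sq_nonneg]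
    · by_cases hw : w = x <;>
        simp [contract, hu, hw, norm, Real.sq_sqrt, sum_nonneg, sq_nonneg]

theorem Nonneg.contract (hF : F.Nonneg) : (F.contract x).Nonneg := by
  cases F with
  | const c => exact hF
  | vec v f => by_cases h : v = x <;> simp_all [Factor.contract, Nonneg]
  | mat u w M =>
    by_cases hu : u = x <;> by_cases hw : w = x <;> simp_all [Factor.contract, Nonneg]

theorem Loopless.contract (hF : F.Loopless) : (F.contract x).Loopless := by
  cases F with
  | const c => trivial
  | vec v f => by_cases h : v = x <;> simp [Factor.contract, Loopless, h]
  | mat u w M =>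
    by_cases hu : u = x <;> by_cases hw : w = x <;> simp_all [Factor.contract, Loopless]

theorem not_incident_contract (hF : F.Loopless) : ¬(F.contract x).Incident x := by
  cases F with
  | const c => exact id
  | vec v f => by_cases h : v = x <;> simp [contract, Incident, h]
  | mat u w M =>
    simp only [Loopless] at hF
    by_cases hu : u = x <;> by_cases hw : w = x <;> simp_all [contract, Incident]

theorem incident_contract_iff {y : V} (hF : F.Loopless) (hy : y ≠ x) :
    (F.contract x).Incident y ↔ F.Incident y := by
  cases F with
  | const c => rfl
  | vec v f => by_cases h : v = x <;> simp_all [contract, Incident, eq_comm]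
  | mat u w M =>
    by_cases hu : u = x <;> by_cases hw : w = x <;> simp_all [contract, Incident, eq_comm]

end

variable {ι : Type*} [Fintype ι]

theorem sum_prod_eval_update_le (x : V) (F : ι → Factor V α) (hnn : ∀ k, (F k).Nonneg)
    (hloop : ∀ k, (F k).Loopless) (hx : 1 < #{k | (F k).Incident x}) (φ : V → α) :
    ∑ i, ∏ k, (F k).eval (Function.update φ x i) ≤ ∏ k, ((F k).contract x).eval φ := by
  set I : Finset ι := {k | (F k).Incident x}
  have hrest : ∀ i, ∏ k ∈ univ.filter (fun k => ¬(F k).Incident x),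
      (F k).eval (Function.update φ x i) = ∏ k ∈ univ.filter (fun k => ¬(F k).Incident x),
      ((F k).contract x).eval φ := fun i => prod_congr rfl fun k hk => by
    have hk := (mem_filter.mp hk).2
    rw [eval_update_of_not_incident hk, contract_of_not_incident hk]
  have hinc : ∏ k ∈ I, √(∑ i, (F k).eval (Function.update φ x i) ^ 2) =
      ∏ k ∈ I, ((F k).contract x).eval φ := prod_congr rfl fun k hk =>
    sqrt_sum_sq_eval_update (mem_filter.mp hk).2 (hloop k) φ
  simp_rw [← prod_filter_mul_prod_filter_not univ fun k => (F k).Incident x, hrest, ← sum_mul]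
  refine mul_le_mul_of_nonneg_right ?_ (prod_nonneg fun k _ => ((hnn k).contract).eval_nonneg φ)
  rw [← hinc]
  exact sum_prod_le_prod_sqrt_sum_sq hx _ fun k _ i => (hnn k).eval_nonneg _

/-- Each vertex outside `S` is free and contributes a factor `card α`; this form avoids the
truncated subtraction `card V - #S`. -/
theorem card_pow_mul_sum_prod_eval_le [Fintype V] (S : Finset V) (F : ι → Factor V α)
    (hnn : ∀ k, (F k).Nonneg) (hloop : ∀ k, (F k).Loopless)
    (hS : ∀ k x, (F k).Incident x → x ∈ S) (hdeg : ∀ x ∈ S, 1 < #{k | (F k).Incident x}) :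
    (Fintype.card α : ℝ) ^ #S * ∑ φ : V → α, ∏ k, (F k).eval φ
      ≤ (Fintype.card α : ℝ) ^ Fintype.card V * ∏ k, (F k).norm := by
  induction S using Finset.induction_on generalizing F with
  | empty =>
    have h : ∀ k φ, (F k).eval φ = (F k).norm := fun k =>
      eval_eq_norm_of_forall_not_incident (hnn k) fun x hx => notMem_empty x (hS k x hx)
    simp [h]
  | insert x S hxS ih =>
    have hS' : ∀ k y, ((F k).contract x).Incident y → y ∈ S := fun k y hy => by
      have hyx : y ≠ x := by rintro rfl; exact not_incident_contract (hloop k) hy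
      exact (mem_insert.mp (hS k y ((incident_contract_iff (hloop k) hyx).mp hy))).resolve_left
        hyx
    have hdeg' : ∀ y ∈ S, 1 < #{k | ((F k).contract x).Incident y} := fun y hy => by
      have hyx : y ≠ x := by rintro rfl; exact hxS hy
      simpa only [incident_contract_iff (hloop _) hyx] using hdeg y (mem_insert_of_mem hy)
    calc (Fintype.card α : ℝ) ^ #(insert x S) * ∑ φ : V → α, ∏ k, (F k).eval φ
        = (Fintype.card α : ℝ) ^ #S *
            ∑ φ : V → α, ∑ i, ∏ k, (F k).eval (Function.update φ x i) := by
          rw [card_insert_of_notMem hxS, pow_succ, mul_assoc,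
            sum_sum_update_eq_card_smul x fun ψ => ∏ k, (F k).eval ψ, nsmul_eq_mul]
      _ ≤ (Fintype.card α : ℝ) ^ #S * ∑ φ : V → α, ∏ k, ((F k).contract x).eval φ := by
          gcongr with φ
          exact sum_prod_eval_update_le x F hnn hloop (hdeg x (mem_insert_self x S)) φ
      _ ≤ (Fintype.card α : ℝ) ^ Fintype.card V * ∏ k, (F k).norm := by
          simpa only [norm_contract] using
            ih _ (fun k => (hnn k).contract) (fun k => (hloop k).contract) hS' hdeg'

theorem sum_prod_eval_le_prod_norm [Fintype V] [Nonempty α] (F : ι → Factor V α)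
    (hnn : ∀ k, (F k).Nonneg) (hloop : ∀ k, (F k).Loopless)
    (hdeg : ∀ x, 1 < #{k | (F k).Incident x}) :
    ∑ φ : V → α, ∏ k, (F k).eval φ ≤ ∏ k, (F k).norm := by
  have h := card_pow_mul_sum_prod_eval_le univ F hnn hloop (fun _ _ _ => mem_univ _)
    fun x _ => hdeg x
  rw [card_univ] at h
  exact le_of_mul_le_mul_left h (pow_pos (Nat.cast_pos.mpr Fintype.card_pos) _)

end Factor

section Patterns

variable {T β γ : Type*} [Fintype T]

/-- For `c = Sum.elim i j` this is the number `s(i, j)` of indices occurring exactly once. -/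
def singletonFiberCount [Fintype β] [DecidableEq β] (c : T → β) : ℕ :=
  #{x | #{t | c t = x} = 1}

theorem singletonFiberCount_comp_of_injective [Fintype β] [DecidableEq β] [Fintype γ]
    [DecidableEq γ] {e : γ → β} (he : Function.Injective e) (m : T → γ) :
    singletonFiberCount (e ∘ m) = singletonFiberCount m := by
  have hfiber : ∀ v, #{t | e (m t) = e v} = #{t | m t = v} := fun v => by simp only [he.eq_iff]
  unfold singletonFiberCount
  rw [← card_image_of_injective _ he]
  congr 1
  ext x
  simp only [Function.comp_apply, mem_filter, mem_univ, true_and, mem_image]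
  constructor
  · intro hx
    obtain ⟨t, ht⟩ := card_pos.mp (hx ▸ one_pos : 0 < #{t | e (m t) = x})
    obtain rfl := (mem_filter.mp ht).2
    exact ⟨m t, by rwa [← hfiber], rfl⟩
  · rintro ⟨v, hv, rfl⟩
    rwa [hfiber]

theorem singletonFiberCount_sumElim {ι : Type*} [Fintype ι] [Fintype β] [DecidableEq β]
    (f g : ι → β) :
    singletonFiberCount (Sum.elim f g) = #{x | #{a | f a = x} + #{a | g a = x} = 1} := by
  have hfiber : ∀ x, #{t | Sum.elim f g t = x} = #{a | f a = x} + #{a | g a = x} := fun x => by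
    rw [card_filter, card_filter, card_filter, Fintype.sum_sum_type]
    rfl
  simp only [singletonFiberCount, hfiber]

open Classical in
theorem singletonFiberCount_mk_ker [Fintype β] [DecidableEq β] (c : T → β) :
    singletonFiberCount (Quotient.mk (Setoid.ker c)) = singletonFiberCount c := by
  rw [← singletonFiberCount_comp_of_injective (Setoid.kerLift_injective c)]
  rfl

noncomputable instance Setoid.instFintype [DecidableEq T] : Fintype (Setoid T) :=
  Fintype.ofInjective (fun R : Setoid T => (R : T → T → Prop)) fun _ _ h =>
    Setoid.ext fun a b => Iff.of_eq (congrFun (congrFun h a) b)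

open Classical in
/-- A labelling with equality pattern `R` factors through `Quotient R`; the bound forgets that
the factored labelling is injective. -/
theorem sum_filter_singletonFiberCount_le [DecidableEq T] [Fintype β] [DecidableEq β]
    (g : (T → β) → ℝ) (hg : ∀ c, 0 ≤ g c) (s : ℕ) :
    ∑ c ∈ univ.filter (fun c : T → β => singletonFiberCount c = s), g c ≤
      ∑ R ∈ univ.filter (fun R : Setoid T => singletonFiberCount (Quotient.mk R) = s),
        ∑ ψ : Quotient R → β, g (ψ ∘ Quotient.mk R) := by
  rw [← sum_fiberwise_of_maps_to (g := Setoid.ker) (t := univ.filter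
    (fun R : Setoid T => singletonFiberCount (Quotient.mk R) = s)) fun c hc => by
      simp only [mem_filter, mem_univ, true_and] at hc ⊢
      convert (singletonFiberCount_mk_ker c).trans hc]
  refine sum_le_sum fun R _ => ?_
  rw [← sum_image fun _ _ _ _ h => (Quotient.mk_surjective).injective_comp_right h]
  refine sum_le_sum_of_subset_of_nonneg (fun c hc => ?_) fun c _ _ => hg c
  have hR : ∀ a b, R a b → c a = c b := fun a b h => by rwa [← (mem_filter.mp hc).2] at h
  exact mem_image.mpr ⟨Quotient.lift c hR, mem_univ _, rfl⟩

end Patterns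

section PatternGraph

variable {ι α : Type*} [Fintype ι]

open Classical in
/-- The multigraph of the pattern `R`, with the all-ones vector attached to each vertex of
degree one. -/
noncomputable def patternFactors (R : Setoid (ι ⊕ ι)) (B : ι → Matrix α α ℝ) :
    ι ⊕ Quotient R → Factor (Quotient R) α :=
  Sum.elim (fun a => .mat ⟦.inl a⟧ ⟦.inr a⟧ (B a))
    fun v => if #{t | ⟦t⟧ = v} = 1 then .vec v 1 else .const 1

open Classical in
theorem card_incident_patternFactors {R : Setoid (ι ⊕ ι)} (B : ι → Matrix α α ℝ)
    (hR : ∀ a, ¬R (.inl a) (.inr a)) (v : Quotient R) :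
    #{k | (patternFactors R B k).Incident v} =
      #{t | (⟦t⟧ : Quotient R) = v} + if #{t | (⟦t⟧ : Quotient R) = v} = 1 then 1 else 0 := by
  have hedges : ∑ a : ι, (if (⟦.inl a⟧ : Quotient R) = v ∨ ⟦.inr a⟧ = v then 1 else 0) =
      #{t | (⟦t⟧ : Quotient R) = v} := by
    rw [card_filter, Fintype.sum_sum_type, ← sum_add_distrib]
    refine sum_congr rfl fun a _ => ?_
    have hne : (⟦.inl a⟧ : Quotient R) ≠ ⟦.inr a⟧ := fun h => hR a (Quotient.exact h)
    by_cases h : (⟦.inl a⟧ : Quotient R) = v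
    · simpa [h] using fun h' : (⟦.inr a⟧ : Quotient R) = v => hne (h.trans h'.symm)
    · simp [h]
  have hvec : ∑ w : Quotient R, (if (patternFactors R B (.inr w)).Incident v then 1 else 0) =
      if #{t | (⟦t⟧ : Quotient R) = v} = 1 then 1 else 0 := by
    simp only [patternFactors, Sum.elim_inr]
    rw [sum_eq_single v (fun w _ hw => by split_ifs <;> simp_all [Factor.Incident]) (by simp)]
    split_ifs <;> simp_all [Factor.Incident]
  rw [card_filter, Fintype.sum_sum_type, hvec, ← hedges]
  rfl

open Classical in
theorem prod_eval_patternFactors (R : Setoid (ι ⊕ ι)) (B : ι → Matrix α α ℝ)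
    (ψ : Quotient R → α) :
    ∏ k, (patternFactors R B k).eval ψ = ∏ a, B a (ψ ⟦.inl a⟧) (ψ ⟦.inr a⟧) := by
  have hvec : ∀ v, (patternFactors R B (.inr v)).eval ψ = 1 := fun v => by
    simp only [patternFactors, Sum.elim_inr]
    split_ifs <;> rfl
  simp only [Fintype.prod_sum_type, hvec, prod_const_one, mul_one]
  rfl

open Classical in
theorem prod_norm_patternFactors [Fintype α] (R : Setoid (ι ⊕ ι)) (B : ι → Matrix α α ℝ) :
    ∏ k, (patternFactors R B k).norm =
      (∏ a, √(∑ i, ∑ j, B a i j ^ 2)) *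
        √(Fintype.card α) ^ singletonFiberCount (Quotient.mk R) := by
  have hvec : ∀ v, (patternFactors R B (.inr v)).norm =
      if #{t | (⟦t⟧ : Quotient R) = v} = 1 then √(Fintype.card α) else 1 := fun v => by
    simp only [patternFactors, Sum.elim_inr]
    split_ifs <;> simp [Factor.norm]
  simp only [Fintype.prod_sum_type, hvec, prod_ite, prod_const, one_pow, mul_one]
  rfl

open Classical in
theorem sum_prod_quotient_le [Fintype α] [Nonempty α] (R : Setoid (ι ⊕ ι))
    (B : ι → Matrix α α ℝ) (h0 : ∀ a i j, 0 ≤ B a i j) (hdiag : ∀ a i, B a i i = 0)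
    (hHS : ∀ a, √(∑ i, ∑ j, B a i j ^ 2) ≤ 1) :
    ∑ ψ : Quotient R → α, ∏ a, B a (ψ ⟦.inl a⟧) (ψ ⟦.inr a⟧) ≤
      √(Fintype.card α) ^ singletonFiberCount (Quotient.mk R) := by
  by_cases hloop : ∃ a, R (.inl a) (.inr a)
  · obtain ⟨a, ha⟩ := hloop
    rw [sum_eq_zero fun ψ _ => prod_eq_zero (mem_univ a) (by rw [Quotient.sound ha, hdiag])]
    positivity
  push Not at hloop
  have hnn : ∀ k, (patternFactors R B k).Nonneg := by
    rintro (a | v)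
    · exact h0 a
    · simp only [patternFactors, Sum.elim_inr]
      split_ifs <;> simp [Factor.Nonneg]
  have hloopless : ∀ k, (patternFactors R B k).Loopless := by
    rintro (a | v)
    · exact fun h => hloop a (Quotient.exact h)
    · simp only [patternFactors, Sum.elim_inr]
      split_ifs <;> trivial
  have hdeg : ∀ v, 1 < #{k | (patternFactors R B k).Incident v} := fun v => by
    have hclass : 0 < #{t | (⟦t⟧ : Quotient R) = v} :=
      card_pos.mpr (Quotient.inductionOn v fun t => ⟨t, by simp⟩)
    rw [card_incident_patternFactors B hloop]
    split_ifs <;> omega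
  calc ∑ ψ : Quotient R → α, ∏ a, B a (ψ ⟦.inl a⟧) (ψ ⟦.inr a⟧)
      = ∑ ψ : Quotient R → α, ∏ k, (patternFactors R B k).eval ψ := by
        simp only [prod_eval_patternFactors]
    _ ≤ ∏ k, (patternFactors R B k).norm :=
        Factor.sum_prod_eval_le_prod_norm _ hnn hloopless hdeg
    _ ≤ √(Fintype.card α) ^ singletonFiberCount (Quotient.mk R) := by
        rw [prod_norm_patternFactors]
        exact mul_le_of_le_one_left (by positivity)
          (prod_le_one (fun _ _ => Real.sqrt_nonneg _) fun a _ => hHS a)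

end PatternGraph

theorem sum_prod_le_card_setoid_mul_sqrt_pow {ι α : Type*} [Fintype ι] [DecidableEq ι]
    [Fintype α] [DecidableEq α] [Nonempty α] (B : ι → Matrix α α ℝ) (h0 : ∀ a i j, 0 ≤ B a i j)
    (hdiag : ∀ a i, B a i i = 0) (hHS : ∀ a, √(∑ i, ∑ j, B a i j ^ 2) ≤ 1) (s : ℕ) :
    ∑ ij ∈ univ.filter
        (fun ij : (ι → α) × (ι → α) => singletonFiberCount (Sum.elim ij.1 ij.2) = s),
        ∏ a, B a (ij.1 a) (ij.2 a)
      ≤ Fintype.card (Setoid (ι ⊕ ι)) * √(Fintype.card α) ^ s := by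
  classical
  calc _ = ∑ c ∈ univ.filter (fun c : ι ⊕ ι → α => singletonFiberCount c = s),
        ∏ a, B a (c (.inl a)) (c (.inr a)) :=
        sum_equiv (Equiv.sumArrowEquivProdArrow ι ι α).symm (fun _ => by simp; rfl)
          fun _ _ => rfl
    _ ≤ ∑ R ∈ univ.filter (fun R : Setoid (ι ⊕ ι) => singletonFiberCount (Quotient.mk R) = s),
        ∑ ψ : Quotient R → α, ∏ a, B a (ψ ⟦.inl a⟧) (ψ ⟦.inr a⟧) :=
        sum_filter_singletonFiberCount_le _ (fun c => prod_nonneg fun a _ => h0 _ _ _) s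
    _ ≤ ∑ R ∈ univ.filter (fun R : Setoid (ι ⊕ ι) => singletonFiberCount (Quotient.mk R) = s),
        √(Fintype.card α) ^ s :=
        sum_le_sum fun R hR => (mem_filter.mp hR).2 ▸ sum_prod_quotient_le R B h0 hdiag hHS
    _ ≤ Fintype.card (Setoid (ι ⊕ ι)) * √(Fintype.card α) ^ s := by
        rw [sum_const, nsmul_eq_mul]
        exact mul_le_mul_of_nonneg_right (Nat.cast_le.mpr (card_filter_le _ _)) (by positivity)

theorem combinatorial_bound_products_matrix_entries_general
    (l : ℕ) :
    ∃ Cl : ℝ, 0 < Cl ∧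
      ∀ n : ℕ, 1 ≤ n →
      ∀ B : Fin l → Matrix (Fin n) (Fin n) ℝ,
        (∀ a i j, 0 ≤ B a i j) →
        (∀ a i, B a i i = 0) →
        (∀ a, Real.sqrt (∑ i, ∑ j, (B a i j) ^ 2) ≤ 1) →
        ∀ s : ℕ, s ≤ 2 * l →
          ∑ ij ∈ Finset.univ.filter
              (fun ij : (Fin l → Fin n) × (Fin l → Fin n) =>
                (Finset.univ.filter (fun v : Fin n =>
                  (Finset.univ.filter (fun a : Fin l => ij.1 a = v)).card
                    + (Finset.univ.filter (fun a : Fin l => ij.2 a = v)).card = 1)).card = s),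
            ∏ a : Fin l, B a (ij.1 a) (ij.2 a)
            ≤ Cl * (n : ℝ) ^ ((s : ℝ) / 2) := by
  refine ⟨Fintype.card (Setoid (Fin l ⊕ Fin l)), Nat.cast_pos.mpr Fintype.card_pos, ?_⟩
  intro n hn B hB0 hdiag hHS s _
  have : Nonempty (Fin n) := ⟨⟨0, hn⟩⟩
  simp_rw [← singletonFiberCount_sumElim]
  calc _ ≤ _ := sum_prod_le_card_setoid_mul_sqrt_pow B hB0 hdiag hHS s
    _ = _ := by
      rw [Fintype.card_fin, Real.sqrt_eq_rpow, ← Real.rpow_natCast,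
        ← Real.rpow_mul (Nat.cast_nonneg _)]
      ring_nf

/-- Lemma A.4: combinatorial bound for sums of products of entries of
matrices with nonnegative entries, zero diagonal, and Hilbert–Schmidt norm at most 1,
over index tuples with a prescribed number `s` of singly-occurring indices. -/
theorem combinatorial_bound_products_matrix_entries
    (l : ℕ) (hl : 1 ≤ l) :
    ∃ Cl : ℝ, 0 < Cl ∧
      ∀ n : ℕ, 1 ≤ n →
      ∀ B : Fin l → Matrix (Fin n) (Fin n) ℝ,
        (∀ a i j, 0 ≤ B a i j) →
        (∀ a i, B a i i = 0) →
        (∀ a, Real.sqrt (∑ i, ∑ j, (B a i j) ^ 2) ≤ 1) →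
        ∀ s : ℕ, s ≤ 2 * l →
          ∑ ij ∈ Finset.univ.filter
              (fun ij : (Fin l → Fin n) × (Fin l → Fin n) =>
                (Finset.univ.filter (fun v : Fin n =>
                  (Finset.univ.filter (fun a : Fin l => ij.1 a = v)).card
                    + (Finset.univ.filter (fun a : Fin l => ij.2 a = v)).card = 1)).card = s),
            ∏ a : Fin l, B a (ij.1 a) (ij.2 a)
            ≤ Cl * (n : ℝ) ^ ((s : ℝ) / 2) :=
  combinatorial_bound_products_matrix_entries_general l
end

section
/- Quantitative injectivity of the componentwise Möbius-type map (key estimate in Proposition 4.1(a)): Let k be a positive integer, K ≥ 0, and κ_1, …, κ_k ∈ [0, K]. Define f : ℝ^k → ℝ^k componentwise by f_s(a) = a_s/(1 + κ_s·a_s). Then for all a, b ∈ ℝ^k such that 1 + κ_s·a_s ≠ 0 and 1 + κ_s·b_s ≠ 0 for every s ∈ {1,…,k}, one has ‖f(a) − f(b)‖ ≥ (1+K)^{−2}·‖a − b‖ / ((1 + ‖a‖)·(1 + ‖b‖)), where ‖·‖ denotes the Euclidean norm on ℝ^k. -/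
/-- Euclidean norm on `ℝ^k`. -/
noncomputable def e2norm {k : ℕ} (x : Fin k → ℝ) : ℝ := Real.sqrt (∑ i, x i ^ 2)

/-!
Coordinatewise, `f_s(a) - f_s(b) = (a_s - b_s) / ((1 + κ_s a_s)(1 + κ_s b_s))`, and each
denominator factor is at most `(1 + K)(1 + ‖a‖)` resp. `(1 + K)(1 + ‖b‖)` in absolute value.
Hence `|a_s - b_s| ≤ (1 + K)² (1 + ‖a‖)(1 + ‖b‖) |f_s(a) - f_s(b)|` for every `s`, and a
coordinatewise domination of absolute values passes to Euclidean norms.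
-/

lemma e2norm_nonneg {k : ℕ} (x : Fin k → ℝ) : 0 ≤ e2norm x := Real.sqrt_nonneg _

lemma abs_le_e2norm {k : ℕ} (x : Fin k → ℝ) (s : Fin k) : |x s| ≤ e2norm x := by
  rw [← Real.sqrt_sq_eq_abs]
  exact Real.sqrt_le_sqrt (Finset.single_le_sum (fun i _ ↦ sq_nonneg (x i)) (Finset.mem_univ s))

lemma e2norm_le_mul_of_forall_abs_le {k : ℕ} {x y : Fin k → ℝ} {c : ℝ} (hc : 0 ≤ c)
    (h : ∀ s, |x s| ≤ c * |y s|) : e2norm x ≤ c * e2norm y := by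
  have hsq : ∑ s, x s ^ 2 ≤ c ^ 2 * ∑ s, y s ^ 2 := by
    rw [Finset.mul_sum]
    refine Finset.sum_le_sum fun s _ ↦ ?_
    rw [← mul_pow]
    exact sq_le_sq.2 <| by rw [abs_mul, abs_of_nonneg hc]; exact h s
  calc e2norm x ≤ Real.sqrt (c ^ 2 * ∑ s, y s ^ 2) := Real.sqrt_le_sqrt hsq
    _ = c * e2norm y := by rw [Real.sqrt_mul (sq_nonneg c), Real.sqrt_sq hc, e2norm]

lemma div_one_add_mul_sub_div_one_add_mul {F : Type*} [Field F] {κ x y : F}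
    (hx : 1 + κ * x ≠ 0) (hy : 1 + κ * y ≠ 0) :
    x / (1 + κ * x) - y / (1 + κ * y) = (x - y) / ((1 + κ * x) * (1 + κ * y)) := by
  rw [div_sub_div _ _ hx hy]
  ring

lemma abs_one_add_mul_le {κ K x X : ℝ} (hκ : κ ∈ Set.Icc 0 K) (hx : |x| ≤ X) :
    |1 + κ * x| ≤ (1 + K) * (1 + X) := by
  have hK : 0 ≤ K := hκ.1.trans hκ.2
  have hX : 0 ≤ X := (abs_nonneg x).trans hx
  have hκx : |κ * x| ≤ K * X := by
    rw [abs_mul, abs_of_nonneg hκ.1]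
    exact mul_le_mul hκ.2 hx (abs_nonneg x) hK
  calc |1 + κ * x| ≤ |1| + |κ * x| := abs_add_le 1 (κ * x)
    _ ≤ 1 + K * X := by rw [abs_one]; linarith
    _ ≤ (1 + K) * (1 + X) := by nlinarith

lemma abs_sub_le_mul_abs_sub_div_one_add_mul {κ K x y X Y : ℝ} (hκ : κ ∈ Set.Icc 0 K)
    (hx : |x| ≤ X) (hy : |y| ≤ Y) (hx₀ : 1 + κ * x ≠ 0) (hy₀ : 1 + κ * y ≠ 0) :
    |x - y| ≤ (1 + K) ^ 2 * ((1 + X) * (1 + Y)) * |x / (1 + κ * x) - y / (1 + κ * y)| := by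
  have hden : |(1 + κ * x) * (1 + κ * y)| ≤ (1 + K) ^ 2 * ((1 + X) * (1 + Y)) := by
    rw [abs_mul]
    calc |1 + κ * x| * |1 + κ * y| ≤ ((1 + K) * (1 + X)) * ((1 + K) * (1 + Y)) :=
          mul_le_mul (abs_one_add_mul_le hκ hx) (abs_one_add_mul_le hκ hy) (abs_nonneg _)
            ((abs_nonneg _).trans (abs_one_add_mul_le hκ hx))
      _ = (1 + K) ^ 2 * ((1 + X) * (1 + Y)) := by ring
  rw [div_one_add_mul_sub_div_one_add_mul hx₀ hy₀, abs_div]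
  calc |x - y| = |(1 + κ * x) * (1 + κ * y)| * (|x - y| / |(1 + κ * x) * (1 + κ * y)|) :=
        (mul_div_cancel₀ _ (abs_ne_zero.2 (mul_ne_zero hx₀ hy₀))).symm
    _ ≤ _ := mul_le_mul_of_nonneg_right hden (by positivity)

theorem componentwise_map_quantitative_injectivity_general
    (k : ℕ) (K : ℝ)
    (κ : Fin k → ℝ) (hκ : ∀ s, κ s ∈ Set.Icc (0 : ℝ) K)
    (f : (Fin k → ℝ) → Fin k → ℝ)
    (hf : ∀ a s, f a s = a s / (1 + κ s * a s)) :
    ∀ a b : Fin k → ℝ,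
      (∀ s, 1 + κ s * a s ≠ 0) → (∀ s, 1 + κ s * b s ≠ 0) →
      ((1 + K) ^ 2)⁻¹ * e2norm (a - b) / ((1 + e2norm a) * (1 + e2norm b))
        ≤ e2norm (f a - f b) := by
  intro a b ha hb
  set D := (1 + K) ^ 2 * ((1 + e2norm a) * (1 + e2norm b))
  have hD : 0 ≤ D := by unfold D e2norm; positivity
  have hcoord : ∀ s, |(a - b) s| ≤ D * |(f a - f b) s| := fun s ↦ by
    simpa only [Pi.sub_apply, hf] using abs_sub_le_mul_abs_sub_div_one_add_mul (hκ s)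
      (abs_le_e2norm a s) (abs_le_e2norm b s) (ha s) (hb s)
  rw [inv_mul_eq_div, div_div]
  exact div_le_of_le_mul₀ hD (e2norm_nonneg _) <| by
    rw [mul_comm]; exact e2norm_le_mul_of_forall_abs_le hD hcoord

/-- quantitative injectivity of the componentwise map
`f_s(a) = a_s / (1 + κ_s a_s)` with `0 ≤ κ_s ≤ K`. -/
theorem componentwise_map_quantitative_injectivity
    (k : ℕ) (hk : 0 < k) (K : ℝ) (hK : 0 ≤ K)
    (κ : Fin k → ℝ) (hκ : ∀ s, κ s ∈ Set.Icc (0 : ℝ) K)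
    (f : (Fin k → ℝ) → Fin k → ℝ)
    (hf : ∀ a s, f a s = a s / (1 + κ s * a s)) :
    ∀ a b : Fin k → ℝ,
      (∀ s, 1 + κ s * a s ≠ 0) → (∀ s, 1 + κ s * b s ≠ 0) →
      ((1 + K) ^ 2)⁻¹ * e2norm (a - b) / ((1 + e2norm a) * (1 + e2norm b))
        ≤ e2norm (f a - f b) :=
  componentwise_map_quantitative_injectivity_general k K κ hκ f hf
end
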